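/- arXiv:1606.01227 — 6 statements merged into one kernel-verified Lean document; each statement's English description precedes it below -/
import Mathlib

section
/- When d is odd, the antisymmetric d×d matrix Ω with Ω_{pq} = sign(q-p) has rank d-1, its image is the hyperplane H = {v : Σ_p (-1)^p v_p = 0}, and its kernel is spanned by the vector h* = Σ_p (-1)^p e_p. -/
/-- The antisymmetric matrix `Ω` with `Ω p q = sign (q - p)`. -/
def Omega (d : ℕ) : Matrix (Fin d) (Fin d) ℤ :=
  Matrix.of fun p q => if p < q then 1 else if q < p then -1 else 0

/-- The alternating vector `h* = Σ_p (-1)^p e_p`. -/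
def hstar (d : ℕ) : Fin d → ℤ := fun p => (-1) ^ (p : ℕ)

/-!
Since `(Ω u)_p = Σ_{q>p} u_q - Σ_{q<p} u_q`, consecutive entries satisfy
`(Ω u)_p - (Ω u)_{p+1} = u_p + u_{p+1}`. Hence a kernel vector alternates in sign, and
`Ω h*` is constant; a constant vector `w` has `h* ⬝ᵥ w = w_0` because `Σ_p (-1)^p = 1` for `d`
odd, and `h* ⬝ᵥ Ω h* = 0` by antisymmetry, so `Ω h* = 0` and the image lies in the hyperplane.
For `v` in the hyperplane, solving `u_p + u_{p+1} = v_p - v_{p+1}` recursively makes `Ω u - v`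
constant and orthogonal to `h*`, hence zero. The rank then follows from rank–nullity over `ℤ`.
-/

open Matrix

theorem Fin.eq_pow_mul_of_forall_succ {R : Type*} [Monoid R] {n : ℕ} {f : Fin (n + 1) → R} {a : R}
    (h : ∀ i : Fin n, f i.succ = a * f i.castSucc) (i : Fin (n + 1)) :
    f i = a ^ (i : ℕ) * f 0 := by
  induction i using Fin.induction with
  | zero => simp
  | succ i ih => rw [h, ih, Fin.val_succ, Fin.val_castSucc, pow_succ', mul_assoc]

theorem Fin.exists_add_succ_eq {G : Type*} [AddGroup G] {n : ℕ} (g : Fin n → G) :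
    ∃ u : Fin (n + 1) → G, ∀ i : Fin n, u i.castSucc + u i.succ = g i :=
  ⟨Fin.induction 0 fun i x => -x + g i, fun i => by
    dsimp only
    rw [Fin.induction_succ, add_neg_cancel_left]⟩

theorem Matrix.dotProduct_mulVec_self_of_transpose_eq_neg {n R : Type*} [Fintype n] [CommRing R]
    [IsAddTorsionFree R] {A : Matrix n n R} (hA : Aᵀ = -A) (v : n → R) : v ⬝ᵥ A *ᵥ v = 0 := by
  have hvA : v ᵥ* A = -(A *ᵥ v) := by
    rw [← neg_mulVec, ← hA, mulVec_transpose]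
  have : v ⬝ᵥ A *ᵥ v = -(v ⬝ᵥ A *ᵥ v) :=
    calc v ⬝ᵥ A *ᵥ v = v ᵥ* A ⬝ᵥ v := dotProduct_mulVec v A v
      _ = -(v ⬝ᵥ A *ᵥ v) := by rw [hvA, neg_dotProduct, dotProduct_comm]
  exact self_eq_neg.mp this

theorem hstar_dotProduct_const {d : ℕ} (hd : Odd d) (c : ℤ) : hstar d ⬝ᵥ (fun _ => c) = c := by
  simp [dotProduct, hstar, ← Finset.sum_mul, Fin.sum_neg_one_pow, Nat.not_even_iff_odd.mpr hd]

theorem hstar_castSucc_add_succ {n : ℕ} (i : Fin n) :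
    hstar (n + 1) i.castSucc + hstar (n + 1) i.succ = 0 := by
  simp [hstar, pow_succ]

theorem eq_zero_of_castSucc_eq_succ_of_hstar_dotProduct_eq_zero {n : ℕ} (hd : Odd (n + 1))
    {w : Fin (n + 1) → ℤ} (hw : ∀ i : Fin n, w i.castSucc = w i.succ)
    (h : hstar (n + 1) ⬝ᵥ w = 0) : w = 0 := by
  have hconst : w = fun _ => w 0 := funext fun i => by
    simpa using Fin.eq_pow_mul_of_forall_succ (f := w) (a := 1) (fun i => by rw [one_mul, hw]) i
  rw [hconst, hstar_dotProduct_const hd] at h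
  rw [hconst, h]
  rfl

namespace Omega

theorem transpose_eq_neg (d : ℕ) : (Omega d)ᵀ = -Omega d := by
  ext p q
  simp only [transpose_apply, neg_apply, Omega, of_apply]
  split_ifs <;> first | rfl | omega

theorem apply_castSucc_sub_apply_succ {n : ℕ} (i : Fin n) (q : Fin (n + 1)) :
    Omega (n + 1) i.castSucc q - Omega (n + 1) i.succ q =
      (if q = i.castSucc then 1 else 0) + (if q = i.succ then 1 else 0) := by
  simp only [Omega, of_apply, Fin.ext_iff, Fin.lt_def, Fin.val_castSucc, Fin.val_succ]
  split_ifs <;> omega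

theorem mulVec_castSucc_sub_mulVec_succ {n : ℕ} (u : Fin (n + 1) → ℤ) (i : Fin n) :
    (Omega (n + 1) *ᵥ u) i.castSucc - (Omega (n + 1) *ᵥ u) i.succ = u i.castSucc + u i.succ := by
  simp only [mulVec, dotProduct, ← Finset.sum_sub_distrib, ← sub_mul,
    apply_castSucc_sub_apply_succ, add_mul, ite_mul, one_mul, zero_mul, Finset.sum_add_distrib,
    Finset.sum_ite_eq', Finset.mem_univ, if_true]

theorem mulVec_hstar_of_odd {n : ℕ} (hd : Odd (n + 1)) : Omega (n + 1) *ᵥ hstar (n + 1) = 0 := by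
  refine eq_zero_of_castSucc_eq_succ_of_hstar_dotProduct_eq_zero hd (fun i => ?_) ?_
  · rw [← sub_eq_zero, mulVec_castSucc_sub_mulVec_succ, hstar_castSucc_add_succ]
  · exact dotProduct_mulVec_self_of_transpose_eq_neg (transpose_eq_neg _) _

theorem hstar_dotProduct_mulVec_of_odd {n : ℕ} (hd : Odd (n + 1)) (u : Fin (n + 1) → ℤ) :
    hstar (n + 1) ⬝ᵥ Omega (n + 1) *ᵥ u = 0 := by
  rw [dotProduct_mulVec, ← mulVec_transpose, transpose_eq_neg, neg_mulVec, mulVec_hstar_of_odd hd,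
    neg_zero, zero_dotProduct]

theorem mulVec_eq_zero_iff_of_odd {n : ℕ} (hd : Odd (n + 1)) (v : Fin (n + 1) → ℤ) :
    Omega (n + 1) *ᵥ v = 0 ↔ ∃ c : ℤ, v = c • hstar (n + 1) := by
  constructor
  · intro hv
    have hstep (i : Fin n) : v i.succ = -1 * v i.castSucc := by
      have := mulVec_castSucc_sub_mulVec_succ v i
      rw [hv, Pi.zero_apply, Pi.zero_apply, sub_zero, eq_comm, add_eq_zero_iff_eq_neg'] at this
      rw [this, neg_one_mul]
    exact ⟨v 0, funext fun i => by
      rw [Fin.eq_pow_mul_of_forall_succ hstep i, Pi.smul_apply, smul_eq_mul, hstar, mul_comm]⟩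
  · rintro ⟨c, rfl⟩
    rw [mulVec_smul, mulVec_hstar_of_odd hd, smul_zero]

theorem range_mulVec_of_odd {n : ℕ} (hd : Odd (n + 1)) :
    Set.range (Omega (n + 1) *ᵥ ·) = {v | hstar (n + 1) ⬝ᵥ v = 0} := by
  ext v
  constructor
  · rintro ⟨u, rfl⟩
    exact hstar_dotProduct_mulVec_of_odd hd u
  · intro hv
    obtain ⟨u, hu⟩ := Fin.exists_add_succ_eq fun i => v i.castSucc - v i.succ
    refine ⟨u, sub_eq_zero.mp
      (eq_zero_of_castSucc_eq_succ_of_hstar_dotProduct_eq_zero hd (fun i => ?_) ?_)⟩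
    · have := mulVec_castSucc_sub_mulVec_succ u i
      simp only [Pi.sub_apply]
      linarith [hu i]
    · rw [dotProduct_sub, hstar_dotProduct_mulVec_of_odd hd, hv, sub_zero]

theorem ker_mulVecLin_of_odd {n : ℕ} (hd : Odd (n + 1)) :
    LinearMap.ker (Omega (n + 1)).mulVecLin = Submodule.span ℤ {hstar (n + 1)} := by
  ext v
  rw [LinearMap.mem_ker, mulVecLin_apply, mulVec_eq_zero_iff_of_odd hd,
    Submodule.mem_span_singleton]
  exact exists_congr fun c => eq_comm

theorem rank_of_odd {n : ℕ} (hd : Odd (n + 1)) : (Omega (n + 1)).rank = n := by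
  have hstar_ne_zero : hstar (n + 1) ≠ 0 := fun h => by simpa [hstar] using congr_fun h 0
  have hker : Module.finrank ℤ (LinearMap.ker (Omega (n + 1)).mulVecLin) = 1 := by
    rw [ker_mulVecLin_of_odd hd,
      ← (LinearEquiv.toSpanNonzeroSingleton ℤ _ _ hstar_ne_zero).finrank_eq, Module.finrank_self]
  have := Submodule.finrank_quotient_add_finrank (LinearMap.ker (Omega (n + 1)).mulVecLin)
  rw [(LinearMap.quotKerEquivRange _).finrank_eq, hker, Module.finrank_fin_fun] at this
  exact Nat.add_right_cancel this

end Omega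

theorem omega_rank_image_kernel_of_odd_general (d : ℕ) (ho : Odd d) :
    (Omega d).rank = d - 1 ∧
    Set.range (Omega d).mulVec = {v : Fin d → ℤ | ∑ p : Fin d, (-1) ^ (p : ℕ) * v p = 0} ∧
    (∀ v : Fin d → ℤ, (Omega d).mulVec v = 0 ↔ ∃ c : ℤ, v = c • hstar d) := by
  obtain ⟨n, rfl⟩ : ∃ n, d = n + 1 := ⟨d - 1, (Nat.sub_add_cancel ho.pos).symm⟩
  exact ⟨Omega.rank_of_odd ho, Omega.range_mulVec_of_odd ho, Omega.mulVec_eq_zero_iff_of_odd ho⟩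

/-- For `d` odd, `Ω` has rank `d-1`, its image is the hyperplane
`{v : Σ_p (-1)^p v_p = 0}`, and its kernel is spanned by `h*`. -/
theorem omega_rank_image_kernel_of_odd (d : ℕ) (hd : 3 ≤ d) (ho : Odd d) :
    (Omega d).rank = d - 1 ∧
    Set.range (Omega d).mulVec = {v : Fin d → ℤ | ∑ p : Fin d, (-1) ^ (p : ℕ) * v p = 0} ∧
    (∀ v : Fin d → ℤ, (Omega d).mulVec v = 0 ↔ ∃ c : ℤ, v = c • hstar d) :=
  omega_rank_image_kernel_of_odd_general d ho
end

section
/- For each p in the alphabet A_d, the operator L_p on ℤ^{A_d} defined by L_p(e_q) = e_q for q ≠ p and L_p(e_p) = -Σ_{r<p} e_r + Σ_{r≥p} e_r satisfies L_p Ω (L_p)^T = Ω, where Ω_{pq} = sign(q-p). -/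
open Matrix

/-- The matrix of the operator `L_p` (columns are the images of the basis vectors):
`L_p e_q = e_q` for `q ≠ p` and `L_p e_p = -Σ_{r<p} e_r + Σ_{r≥p} e_r`. -/
def L (d : ℕ) (p : Fin d) : Matrix (Fin d) (Fin d) ℤ :=
  Matrix.of fun r q => if q = p then (if r < p then -1 else 1) else (if r = q then 1 else 0)

/-! The column of `L_p` at `p` is `e_p - Ω e_p`, so `L_p = 1 - Ω E` with `E = e_p e_pᵀ`.
As `Ω` is skew, `(1 - Ω E) Ω (1 - Ω E)ᵀ = Ω - Ω (E Ω E) Ω`, and `E Ω E = Ω_pp E = 0`. -/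

theorem Matrix.one_sub_mul_mul_mul_transpose_eq_self {n R : Type*} [Fintype n] [DecidableEq n]
    [CommRing R] {A E : Matrix n n R} (hA : Aᵀ = -A) (hE : Eᵀ = E) (hEAE : E * A * E = 0) :
    (1 - A * E) * A * (1 - A * E)ᵀ = A := by
  rw [transpose_sub, transpose_one, transpose_mul, hA, hE]
  calc (1 - A * E) * A * (1 - E * -A) = A - A * (E * A * E) * A := by noncomm_ring
    _ = A := by rw [hEAE, mul_zero, zero_mul, sub_zero]

theorem Omega_transpose (d : ℕ) : (Omega d)ᵀ = -Omega d := by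
  ext a b
  simp only [transpose_apply, Omega, of_apply, Matrix.neg_apply]
  rcases lt_trichotomy a b with h | rfl | h
  · simp [h, h.not_gt]
  · simp
  · simp [h, h.not_gt]

theorem Omega_apply_self (d : ℕ) (p : Fin d) : Omega d p p = 0 := by
  simp [Omega]

theorem L_eq_one_sub_Omega_mul_single (d : ℕ) (p : Fin d) :
    L d p = 1 - Omega d * single p p 1 := by
  ext r q
  rw [Matrix.sub_apply, one_apply]
  by_cases hq : q = p
  · subst hq
    rw [mul_single_apply_same, mul_one]
    rcases lt_trichotomy r q with h | rfl | h
    · simp [L, Omega, h, h.ne]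
    · simp [L, Omega]
    · simp [L, Omega, h, h.ne', h.not_gt]
  · rw [mul_single_apply_of_ne _ _ _ _ _ hq]
    simp [L, hq]

theorem L_preserves_omega_general (d : ℕ) (p : Fin d) :
    L d p * Omega d * (L d p)ᵀ = Omega d := by
  rw [L_eq_one_sub_Omega_mul_single]
  refine one_sub_mul_mul_mul_transpose_eq_self (Omega_transpose d) (transpose_single _ _ _) ?_
  rw [single_mul_mul_single, Omega_apply_self, mul_zero, zero_mul, single_zero]

/-- Each operator `L_p` satisfies `L_p Ω (L_p)ᵀ = Ω`. -/
theorem L_preserves_omega (d : ℕ) (hd : 2 ≤ d) (p : Fin d) :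
    L d p * Omega d * (L d p)ᵀ = Omega d :=
  L_preserves_omega_general d p
end

section
/- When d is odd, every operator L_p fixes the covector h*: one has (h*)^T L_p = (h*)^T, where h* = Σ_p (-1)^{σ(p)} e_p is a generator of the kernel of Ω. Consequently every element of the group generated by the L_p fixes this covector. -/
open Matrix

/-!
For `q ≠ p` the `q`-th column of `L_p` is `e_q`, so only the `p`-th coordinate of `h* L_p`
needs checking. That coordinate is `Σ_r h*_r - 2 Σ_{r<p} h*_r`. For odd `d` the alternating
sum over all of `A_d` is `1`, while the partial sum below `p` is `1` or `0` according as `p` is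
odd or even, so the coordinate is `(-1)^p = h*_p`. The second claim holds because the row
vectors fixed by a unit form a subgroup.
-/

open Finset

section Stabilizer

variable {n R : Type*} [Fintype n] [DecidableEq n] [Semiring R]

def vecMulStabilizer (v : n → R) : Subgroup (Matrix n n R)ˣ where
  carrier := {B | vecMul v (B : Matrix n n R) = v}
  one_mem' := by simp
  mul_mem' {B C} (hB : vecMul v _ = v) (hC : vecMul v _ = v) := by
    change vecMul v ((B : Matrix n n R) * (C : Matrix n n R)) = v
    rw [← vecMul_vecMul, hB, hC]
  inv_mem' {B} (hB : vecMul v _ = v) := by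
    change vecMul v ((B⁻¹ : (Matrix n n R)ˣ) : Matrix n n R) = v
    nth_rewrite 1 [← hB]
    rw [vecMul_vecMul, Units.mul_inv, vecMul_one]

lemma mem_vecMulStabilizer {v : n → R} {B : (Matrix n n R)ˣ} :
    B ∈ vecMulStabilizer v ↔ vecMul v (B : Matrix n n R) = v :=
  Iff.rfl

end Stabilizer

lemma vecMul_L_apply_of_ne {d : ℕ} (v : Fin d → ℤ) {p q : Fin d} (hq : q ≠ p) :
    vecMul v (L d p) q = v q := by
  simp [vecMul, dotProduct, L, hq]

lemma vecMul_L_apply_self {d : ℕ} (v : Fin d → ℤ) (p : Fin d) :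
    vecMul v (L d p) p = ∑ r, v r - 2 * ∑ r ∈ Iio p, v r := by
  have hsplit : ∀ r, v r * (if r < p then -1 else 1) = v r - 2 * (if r < p then v r else 0) := by
    intro r
    split_ifs <;> ring
  simp only [vecMul, dotProduct, L, of_apply, if_true, hsplit, sum_sub_distrib, ← mul_sum,
    ← sum_filter, filter_gt_eq_Iio]

lemma sum_Iio_hstar {d : ℕ} (p : Fin d) :
    ∑ r ∈ Iio p, hstar d r = if Even (p : ℕ) then 0 else 1 := by
  rw [← neg_one_geom_sum, ← Nat.Iio_eq_range, ← Fin.map_valEmbedding_Iio, sum_map]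
  rfl

lemma sum_hstar {d : ℕ} (ho : Odd d) : ∑ r, hstar d r = 1 := by
  change ∑ r : Fin d, (-1 : ℤ) ^ (r : ℕ) = 1
  rw [Fin.sum_univ_eq_sum_range (fun n => (-1 : ℤ) ^ n), neg_one_geom_sum,
    if_neg (Nat.not_even_iff_odd.mpr ho)]

lemma vecMul_hstar_L {d : ℕ} (ho : Odd d) (p : Fin d) : vecMul (hstar d) (L d p) = hstar d := by
  funext q
  rcases eq_or_ne q p with rfl | hq
  · rw [vecMul_L_apply_self, sum_hstar ho, sum_Iio_hstar, hstar]
    rcases Nat.even_or_odd (q : ℕ) with he | hodd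
    · simp [he, he.neg_one_pow]
    · simp [Nat.not_even_iff_odd.mpr hodd, hodd.neg_one_pow]
  · exact vecMul_L_apply_of_ne _ hq

theorem hstar_fixed_general (d : ℕ) (ho : Odd d) :
    (∀ p : Fin d, Matrix.vecMul (hstar d) (L d p) = hstar d) ∧
    (∀ B ∈ Subgroup.closure {u : (Matrix (Fin d) (Fin d) ℤ)ˣ | ∃ p : Fin d, (u : Matrix (Fin d) (Fin d) ℤ) = L d p},
      Matrix.vecMul (hstar d) (B : Matrix (Fin d) (Fin d) ℤ) = hstar d) := by
  refine ⟨vecMul_hstar_L ho, fun B hB => ?_⟩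
  have hgen : {u : (Matrix (Fin d) (Fin d) ℤ)ˣ | ∃ p : Fin d, (u : Matrix (Fin d) (Fin d) ℤ) = L d p}
      ⊆ vecMulStabilizer (hstar d) := by
    rintro u ⟨p, hp⟩
    rw [SetLike.mem_coe, mem_vecMulStabilizer, hp]
    exact vecMul_hstar_L ho p
  exact mem_vecMulStabilizer.mp ((Subgroup.closure_le _).mpr hgen hB)

/-- For `d` odd, every operator `L_p` fixes the covector `h*`: `(h*)ᵀ L_p = (h*)ᵀ`.
Consequently every element of the group generated by the `L_p` fixes this covector. -/
theorem hstar_fixed (d : ℕ) (hd : 3 ≤ d) (ho : Odd d) :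
    (∀ p : Fin d, Matrix.vecMul (hstar d) (L d p) = hstar d) ∧
    (∀ B ∈ Subgroup.closure {u : (Matrix (Fin d) (Fin d) ℤ)ˣ | ∃ p : Fin d, (u : Matrix (Fin d) (Fin d) ℤ) = L d p},
      Matrix.vecMul (hstar d) (B : Matrix (Fin d) (Fin d) ℤ) = hstar d) :=
  hstar_fixed_general d ho
end

section
/- The image in SL((𝔽_2)^{A_d}) of the group generated by the mod-2 reductions of the operators L_p, p ∈ A_d, is the full group of linear automorphisms of (𝔽_2)^{A_d} preserving the set E = {ē*} ∪ {ē_p : p ∈ A_d}, and this group is isomorphic to the symmetric group on d+1 letters. -/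
open Matrix

/-- The mod 2 reduction `L̄_p` of `L_p`. -/
def Lbar (d : ℕ) (p : Fin d) : Matrix (Fin d) (Fin d) (ZMod 2) :=
  (L d p).map (Int.cast : ℤ → ZMod 2)

/-- The set `E = {ē*} ∪ {ē_p : p ∈ A_d}` in `(𝔽₂)^{A_d}`, where `ē* = Σ_p ē_p`. -/
def Eset (d : ℕ) : Set (Fin d → ZMod 2) :=
  insert (fun _ => 1) (Set.range fun p : Fin d => Pi.single p (1 : ZMod 2))

/-!
The `d + 1` vectors of `E` sum to zero and any `d` of them form a basis of `𝔽₂^d`, so every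
permutation `σ` of `E` extends to a unique linear map; this gives an injective homomorphism
`S_{d+1} → GL_d(𝔽₂)` whose image is exactly the stabilizer of `E`. The matrix `L̄_p` is the
image of the transposition `(ē_p ē*)`, and these transpositions generate `S_{d+1}`.
-/

theorem Equiv.Perm.eq_top_of_swap_mem {α : Type*} [Finite α] [DecidableEq α]
    {S : Subgroup (Perm α)} (c : α) (h : ∀ x, swap x c ∈ S) : S = ⊤ := by
  rw [eq_top_iff, ← closure_isSwap, Subgroup.closure_le]
  rintro _ ⟨a, b, -, rfl⟩
  exact SubmonoidClass.swap_mem_trans S (h a) (swap_comm c b ▸ h b)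

namespace LbarGroup

open Equiv

variable {d : ℕ}

/-- `E` indexed by `Fin (d + 1)`, with `ē*` at `Fin.last d`. -/
def eVec (d : ℕ) : Fin (d + 1) → Fin d → ZMod 2 :=
  Fin.snoc (fun q => Pi.single q 1) fun _ => 1

@[simp] lemma eVec_castSucc (q : Fin d) : eVec d q.castSucc = Pi.single q 1 :=
  Fin.snoc_castSucc ..

@[simp] lemma eVec_last : eVec d (Fin.last d) = fun _ => 1 :=
  Fin.snoc_last ..

lemma range_eVec : Set.range (eVec d) = Eset d :=
  Fin.range_snoc ..

lemma eVec_injective (hd : 2 ≤ d) : Function.Injective (eVec d) := by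
  refine Fin.snoc_injective_of_injective (fun q q' h => ?_) ?_
  · by_contra hne
    simpa [Pi.single_eq_of_ne hne] using congrFun h q
  · rintro ⟨q, h⟩
    have : Nontrivial (Fin d) := Fin.nontrivial_iff_two_le.mpr hd
    obtain ⟨r, hr⟩ := exists_ne q
    simpa [Pi.single_eq_of_ne hr] using congrFun h r

lemma sum_eVec_castSucc_perm (σ : Perm (Fin (d + 1))) :
    ∑ q : Fin d, eVec d (σ q.castSucc) = eVec d (σ (Fin.last d)) := by
  have sum_eq_zero : ∑ i, eVec d (σ i) = 0 := by
    rw [Equiv.sum_comp σ, Fin.sum_univ_castSucc]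
    funext r
    simp [Finset.univ_sum_single, CharTwo.add_self_eq_zero]
  rw [Fin.sum_univ_castSucc] at sum_eq_zero
  funext r
  exact CharTwo.add_eq_zero.mp (congrFun sum_eq_zero r)

/-- The linear map extending the permutation `σ` of `E`. -/
def permMatrix (d : ℕ) (σ : Perm (Fin (d + 1))) : Matrix (Fin d) (Fin d) (ZMod 2) :=
  Matrix.of fun r q => eVec d (σ q.castSucc) r

lemma permMatrix_mulVec_eVec (σ : Perm (Fin (d + 1))) (i : Fin (d + 1)) :
    permMatrix d σ *ᵥ eVec d i = eVec d (σ i) := by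
  induction i using Fin.lastCases with
  | last =>
    rw [eVec_last, ← sum_eVec_castSucc_perm]
    funext r
    simp [permMatrix, mulVec, dotProduct]
  | cast q =>
    rw [eVec_castSucc, mulVec_single_one]
    rfl

lemma eq_permMatrix_of_mulVec_eVec {M : Matrix (Fin d) (Fin d) (ZMod 2)} {σ : Perm (Fin (d + 1))}
    (h : ∀ q : Fin d, M *ᵥ eVec d q.castSucc = eVec d (σ q.castSucc)) : M = permMatrix d σ :=
  ext_of_mulVec_single fun q => by
    rw [← eVec_castSucc, h, permMatrix_mulVec_eVec]

def permMatrixHom (d : ℕ) : Perm (Fin (d + 1)) →* Matrix (Fin d) (Fin d) (ZMod 2) where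
  toFun := permMatrix d
  map_one' := (eq_permMatrix_of_mulVec_eVec fun _ => one_mulVec _).symm
  map_mul' σ τ := (eq_permMatrix_of_mulVec_eVec fun _ => by
    rw [← mulVec_mulVec, permMatrix_mulVec_eVec, permMatrix_mulVec_eVec, Perm.mul_apply]).symm

def permUnits (d : ℕ) : Perm (Fin (d + 1)) →* (Matrix (Fin d) (Fin d) (ZMod 2))ˣ :=
  (permMatrixHom d).toHomUnits

@[simp] lemma coe_permUnits (σ : Perm (Fin (d + 1))) :
    (permUnits d σ : Matrix (Fin d) (Fin d) (ZMod 2)) = permMatrix d σ :=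
  rfl

lemma permUnits_injective (hd : 2 ≤ d) : Function.Injective (permUnits d) := fun σ τ h =>
  Perm.ext fun i => eVec_injective hd <| by
    rw [← permMatrix_mulVec_eVec, ← permMatrix_mulVec_eVec, ← coe_permUnits, h, coe_permUnits]

lemma image_permMatrix_mulVec_Eset (σ : Perm (Fin (d + 1))) :
    (permMatrix d σ *ᵥ ·) '' Eset d = Eset d := by
  rw [← range_eVec, ← Set.range_comp]
  simp only [Function.comp_def, permMatrix_mulVec_eVec]
  exact σ.surjective.range_comp (eVec d)

lemma mem_range_permUnits_of_image_Eset (hd : 2 ≤ d) {u : (Matrix (Fin d) (Fin d) (ZMod 2))ˣ}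
    (hu : ((u : Matrix (Fin d) (Fin d) (ZMod 2)) *ᵥ ·) '' Eset d = Eset d) :
    u ∈ (permUnits d).range := by
  have maps_to : ∀ i, ∃ j, eVec d j = (u : Matrix (Fin d) (Fin d) (ZMod 2)) *ᵥ eVec d i :=
    fun i => by
      rw [← Set.mem_range, range_eVec, ← hu, ← range_eVec]
      exact Set.mem_image_of_mem _ (Set.mem_range_self i)
  choose f hf using maps_to
  have hf_inj : Function.Injective f := by
    refine Function.Injective.of_comp (f := eVec d) ?_
    rw [show eVec d ∘ f = _ from funext hf]
    exact (mulVec_injective_of_isUnit u.isUnit).comp (eVec_injective hd)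
  let σ := Equiv.ofBijective f (Finite.injective_iff_bijective.mp hf_inj)
  exact ⟨σ, Units.ext (eq_permMatrix_of_mulVec_eVec fun q => (hf _).symm).symm⟩

lemma Lbar_eq_permMatrix_swap (p : Fin d) :
    Lbar d p = permMatrix d (swap p.castSucc (Fin.last d)) := by
  refine eq_permMatrix_of_mulVec_eVec fun q => ?_
  rw [eVec_castSucc, mulVec_single_one]
  funext r
  rcases eq_or_ne q p with rfl | hqp
  · simp [Lbar, L]
  · rw [swap_apply_of_ne_of_ne (by simpa using hqp) (Fin.castSucc_ne_last q)]
    simp [Lbar, L, hqp, Pi.single_apply]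

lemma eq_top_of_swap_castSucc_last_mem {S : Subgroup (Perm (Fin (d + 1)))}
    (h : ∀ p : Fin d, swap p.castSucc (Fin.last d) ∈ S) : S = ⊤ :=
  Perm.eq_top_of_swap_mem (Fin.last d) fun x => by
    induction x using Fin.lastCases with
    | last => exact (swap_self (Fin.last d)).symm ▸ S.one_mem
    | cast p => exact h p

lemma closure_Lbar_eq_range_permUnits :
    Subgroup.closure {u : (Matrix (Fin d) (Fin d) (ZMod 2))ˣ |
        ∃ p : Fin d, (u : Matrix (Fin d) (Fin d) (ZMod 2)) = Lbar d p} = (permUnits d).range := by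
  refine le_antisymm ((Subgroup.closure_le _).mpr ?_) ?_
  · rintro u ⟨p, hp⟩
    exact ⟨swap p.castSucc (Fin.last d), Units.ext (by rw [hp, Lbar_eq_permMatrix_swap]; rfl)⟩
  · rintro _ ⟨σ, rfl⟩
    suffices (Subgroup.closure _).comap (permUnits d) = ⊤ from
      Subgroup.mem_comap.mp (this ▸ Subgroup.mem_top σ)
    refine eq_top_of_swap_castSucc_last_mem fun p => Subgroup.subset_closure ⟨p, ?_⟩
    rw [Lbar_eq_permMatrix_swap]
    rfl

end LbarGroup

/-- The group generated by the mod-2 reductions of the `L_p` is the full group of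
linear automorphisms of `(𝔽₂)^{A_d}` preserving the set `E = {ē*} ∪ {ē_p}`, and it is
isomorphic to the symmetric group on `d+1` letters. -/
theorem Lbar_group_eq_stabilizer_of_E (d : ℕ) (hd : 2 ≤ d) :
    ((Subgroup.closure {u : (Matrix (Fin d) (Fin d) (ZMod 2))ˣ |
        ∃ p : Fin d, (u : Matrix (Fin d) (Fin d) (ZMod 2)) = Lbar d p} : Subgroup _) : Set _) =
      {u : (Matrix (Fin d) (Fin d) (ZMod 2))ˣ |
        (fun v => (u : Matrix (Fin d) (Fin d) (ZMod 2)).mulVec v) '' Eset d = Eset d} ∧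
    Nonempty ((Subgroup.closure {u : (Matrix (Fin d) (Fin d) (ZMod 2))ˣ |
        ∃ p : Fin d, (u : Matrix (Fin d) (Fin d) (ZMod 2)) = Lbar d p}) ≃* Equiv.Perm (Fin (d + 1))) := by
  rw [LbarGroup.closure_Lbar_eq_range_permUnits]
  refine ⟨Set.ext fun u => ⟨?_, LbarGroup.mem_range_permUnits_of_image_Eset hd⟩,
    ⟨(MonoidHom.ofInjective (LbarGroup.permUnits_injective hd)).symm⟩⟩
  rintro ⟨σ, rfl⟩
  exact LbarGroup.image_permMatrix_mulVec_Eset σ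
end

section
/- Let p < q in A_d and let S_{p,q} be the subgroup generated by L_p and L_q. Then every B ∈ S_{p,q} fixes e_r for all r ∉ {p,q}, and the map B ↦ B♯ = [[B_{pp}, B_{pq}],[B_{qp}, B_{qq}]] is a group isomorphism from S_{p,q} onto SL(2,ℤ). -/
open Matrix

/-- The subgroup `S_{p,q}` of `SL(ℤ^{A_d})` generated by `L_p` and `L_q`
(realized inside the units of the matrix ring). -/
def Spq (d : ℕ) (p q : Fin d) : Subgroup (Matrix (Fin d) (Fin d) ℤ)ˣ :=
  Subgroup.closure {u : (Matrix (Fin d) (Fin d) ℤ)ˣ |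
    (u : Matrix (Fin d) (Fin d) ℤ) = L d p ∨ (u : Matrix (Fin d) (Fin d) ℤ) = L d q}

/-!
For `U : Matrix n m R` and `V : Matrix m n R` with `V * U = 1`, the map `M ↦ 1 + U (M - 1) V` is
multiplicative. Take `V` to select the coordinates `p, q` and `U` with rows `p, q` forming the
identity: then the image of `M` fixes every `e_r` with `r ∉ {p, q}` and its `{p, q}`-block is `M`.
Choosing the columns of `U` to be `e_q - L_q e_q` and `L_p e_p - e_p` sends the transvections
`[[1,0],[1,1]]` and `[[1,-1],[0,1]]`, which generate `SL(2,ℤ)`, to `L_p` and `L_q`. Hence this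
map is an injective homomorphism from `SL(2,ℤ)` onto `S_{p,q}`, inverse to `B ↦ B♯`.
-/

open scoped MatrixGroups

namespace Matrix

variable {R : Type*} [Ring R] {m n : Type*} [DecidableEq m] [DecidableEq n]

def embedAlong [Fintype m] (U : Matrix n m R) (V : Matrix m n R) (M : Matrix m m R) :
    Matrix n n R :=
  1 + U * (M - 1) * V

section

variable [Fintype m] (U : Matrix n m R) (V : Matrix m n R)

theorem embedAlong_one : embedAlong U V 1 = 1 := by
  simp [embedAlong]

theorem embedAlong_mul [Fintype n] (hVU : V * U = 1) (M N : Matrix m m R) :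
    embedAlong U V (M * N) = embedAlong U V M * embedAlong U V N := by
  have hcancel (Y : Matrix m n R) : V * (U * Y) = Y := by
    rw [← Matrix.mul_assoc, hVU, Matrix.one_mul]
  have hsplit : M * N - 1 = (M - 1) + (N - 1) + (M - 1) * (N - 1) := by noncomm_ring
  simp only [embedAlong, hsplit, Matrix.mul_add, Matrix.add_mul, Matrix.mul_one, Matrix.one_mul,
    Matrix.mul_assoc, hcancel]
  abel

def embedAlongHom [Fintype n] (hVU : V * U = 1) : Matrix m m R →* Matrix n n R where
  toFun := embedAlong U V
  map_one' := embedAlong_one U V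
  map_mul' := embedAlong_mul U V hVU

end

section

variable {U : Matrix n m R} {f : m → n}

theorem one_submatrix_id_mul_of_submatrix_eq_one [Fintype n] (hU : U.submatrix f id = 1) :
    (1 : Matrix n n R).submatrix f id * U = 1 := by
  ext k l
  simpa [mul_apply, one_apply] using congrFun (congrFun hU k) l

variable [Fintype m]

theorem embedAlong_apply_of_notMem_range {r : n} (hr : r ∉ Set.range f) (M : Matrix m m R)
    (i : n) : embedAlong U ((1 : Matrix n n R).submatrix f id) M i r = (1 : Matrix n n R) i r := by
  have hV (k : m) : (1 : Matrix n n R).submatrix f id k r = 0 := one_apply_ne fun h => hr ⟨k, h⟩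
  simp only [embedAlong, add_apply, mul_apply, hV, mul_zero, Finset.sum_const_zero, add_zero]

theorem embedAlong_mulVec_single_of_notMem_range [Fintype n] {r : n} (hr : r ∉ Set.range f)
    (M : Matrix m m R) :
    embedAlong U ((1 : Matrix n n R).submatrix f id) M *ᵥ Pi.single r 1 = Pi.single r 1 := by
  ext i
  rw [mulVec_single_one, col_apply, embedAlong_apply_of_notMem_range hr, one_apply,
    Pi.single_apply]

theorem embedAlong_one_add_single_apply (k l : m) (c : R) (i j : n) :
    embedAlong U ((1 : Matrix n n R).submatrix f id) (1 + single k l c) i j =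
      (1 : Matrix n n R) i j + if f l = j then U i k * c else 0 := by
  simp only [embedAlong, add_sub_cancel_left, add_apply, one_apply, mul_apply, single_apply,
    ite_and, mul_ite, mul_zero, Finset.sum_ite_eq, Finset.mem_univ, ↓reduceIte, submatrix_apply,
    id_eq, mul_one, add_right_inj]
  rw [Finset.sum_eq_single l] <;> aesop

theorem submatrix_embedAlong (hf : f.Injective) (hU : U.submatrix f id = 1) (M : Matrix m m R) :
    (embedAlong U ((1 : Matrix n n R).submatrix f id) M).submatrix f f = M := by
  have hU' (k l : m) : U (f k) l = (1 : Matrix m m R) k l := congrFun (congrFun hU k) l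
  ext k l
  simp [embedAlong, mul_apply, hU', one_apply, hf.eq_iff]

end

end Matrix

namespace ModularGroup

def lowerT : SL(2, ℤ) := ⟨!![1, 0; 1, 1], by simp [det_fin_two_of]⟩

theorem coe_lowerT : (lowerT : Matrix (Fin 2) (Fin 2) ℤ) = !![1, 0; 1, 1] := rfl

theorem S_eq_T_inv_mul_lowerT_mul_T_inv : S = T⁻¹ * lowerT * T⁻¹ := by
  ext i j
  fin_cases i <;> fin_cases j <;> simp [coe_S, coe_lowerT, mul_apply, Fin.sum_univ_two]

theorem closure_lowerT_T_inv : Subgroup.closure {lowerT, T⁻¹} = ⊤ := by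
  rw [eq_top_iff, ← SpecialLinearGroup.SL2Z_generators, Subgroup.closure_le]
  have hT_inv : T⁻¹ ∈ Subgroup.closure {lowerT, T⁻¹} := Subgroup.subset_closure (by simp)
  have hlowerT : lowerT ∈ Subgroup.closure {lowerT, T⁻¹} := Subgroup.subset_closure (by simp)
  rintro g (rfl | rfl)
  · rw [S_eq_T_inv_mul_lowerT_mul_T_inv]
    exact mul_mem (mul_mem hT_inv hlowerT) hT_inv
  · simpa using inv_mem hT_inv

end ModularGroup

section Spq

variable {d : ℕ} {p q : Fin d}

def lColumns (d : ℕ) (p q : Fin d) : Matrix (Fin d) (Fin 2) ℤ :=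
  Matrix.of fun i => ![(1 - L d q) i q, (L d p - 1) i p]

theorem L_apply_eq_one_add (i j : Fin d) :
    L d p i j = (1 : Matrix _ _ ℤ) i j + if p = j then (L d p - 1) i p else 0 := by
  by_cases hj : p = j
  · simp [hj]
  · simp [L, Ne.symm hj, hj, one_apply]

theorem lColumns_submatrix (hpq : p < q) : (lColumns d p q).submatrix ![p, q] id = 1 := by
  ext k l
  fin_cases k <;> fin_cases l <;> simp [lColumns, L, hpq, hpq.ne, hpq.ne', hpq.not_gt, one_apply]

def liftSL2 (hpq : p < q) : SL(2, ℤ) →* (Matrix (Fin d) (Fin d) ℤ)ˣ :=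
  (Units.map (embedAlongHom (lColumns d p q) ((1 : Matrix (Fin d) (Fin d) ℤ).submatrix ![p, q] id)
    (one_submatrix_id_mul_of_submatrix_eq_one (lColumns_submatrix hpq)))).comp
      SpecialLinearGroup.toGL

variable (hpq : p < q)

theorem coe_liftSL2 (M : SL(2, ℤ)) :
    (liftSL2 hpq M : Matrix (Fin d) (Fin d) ℤ) =
      embedAlong (lColumns d p q) ((1 : Matrix (Fin d) (Fin d) ℤ).submatrix ![p, q] id) M :=
  rfl

theorem submatrix_liftSL2 (M : SL(2, ℤ)) :
    (liftSL2 hpq M : Matrix (Fin d) (Fin d) ℤ).submatrix ![p, q] ![p, q] = M :=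
  submatrix_embedAlong (injective_pair_iff_ne.mpr hpq.ne) (lColumns_submatrix hpq) M

theorem coe_liftSL2_lowerT :
    (liftSL2 hpq ModularGroup.lowerT : Matrix (Fin d) (Fin d) ℤ) = L d p := by
  have h : !![1, 0; 1, 1] = 1 + single (1 : Fin 2) 0 (1 : ℤ) := by
    ext i j; fin_cases i <;> fin_cases j <;> rfl
  ext i j
  rw [coe_liftSL2, ModularGroup.coe_lowerT, h, embedAlong_one_add_single_apply,
    L_apply_eq_one_add]
  simp [lColumns]

theorem coe_liftSL2_T_inv :
    (liftSL2 hpq ModularGroup.T⁻¹ : Matrix (Fin d) (Fin d) ℤ) = L d q := by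
  have h : !![1, -1; 0, 1] = 1 + single (0 : Fin 2) 1 (-1 : ℤ) := by
    ext i j; fin_cases i <;> fin_cases j <;> rfl
  ext i j
  rw [coe_liftSL2, ModularGroup.coe_T_inv, h, embedAlong_one_add_single_apply,
    L_apply_eq_one_add]
  simp [lColumns]

theorem liftSL2_injective : Function.Injective (liftSL2 hpq) := fun M N h => by
  ext : 1
  rw [← submatrix_liftSL2 hpq M, ← submatrix_liftSL2 hpq N, h]

theorem liftSL2_mulVec_single (M : SL(2, ℤ)) {r : Fin d} (hrp : r ≠ p) (hrq : r ≠ q) :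
    (liftSL2 hpq M : Matrix (Fin d) (Fin d) ℤ) *ᵥ Pi.single r 1 = Pi.single r 1 :=
  embedAlong_mulVec_single_of_notMem_range (by simp [hrp, hrq]) _

theorem range_liftSL2 : (liftSL2 hpq).range = Spq d p q := by
  rw [MonoidHom.range_eq_map, ← ModularGroup.closure_lowerT_T_inv, MonoidHom.map_closure, Spq]
  congr 1
  ext u
  simp only [Set.image_insert_eq, Set.image_singleton, Set.mem_insert_iff,
    Set.mem_singleton_iff, Set.mem_ofPred_eq, Units.ext_iff, coe_liftSL2_lowerT, coe_liftSL2_T_inv]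

end Spq

theorem Spq_iso_SL2_general (d : ℕ) (p q : Fin d) (hpq : p < q) :
    (∀ B ∈ Spq d p q, ∀ r : Fin d, r ≠ p → r ≠ q →
      (B : Matrix (Fin d) (Fin d) ℤ).mulVec (Pi.single r 1) = Pi.single r 1) ∧
    ∃ φ : Spq d p q ≃* Matrix.SpecialLinearGroup (Fin 2) ℤ,
      ∀ B : Spq d p q, (φ B : Matrix (Fin 2) (Fin 2) ℤ) =
        !![((B : (Matrix (Fin d) (Fin d) ℤ)ˣ) : Matrix (Fin d) (Fin d) ℤ) p p,
           ((B : (Matrix (Fin d) (Fin d) ℤ)ˣ) : Matrix (Fin d) (Fin d) ℤ) p q;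
           ((B : (Matrix (Fin d) (Fin d) ℤ)ˣ) : Matrix (Fin d) (Fin d) ℤ) q p,
           ((B : (Matrix (Fin d) (Fin d) ℤ)ˣ) : Matrix (Fin d) (Fin d) ℤ) q q] := by
  have hrange := range_liftSL2 hpq
  refine ⟨fun B hB r hrp hrq => ?_, ?_⟩
  · obtain ⟨M, rfl⟩ := hrange ▸ hB
    exact liftSL2_mulVec_single hpq M hrp hrq
  · let φ : Spq d p q ≃* SL(2, ℤ) := (MulEquiv.subgroupCongr hrange.symm).trans
      (MonoidHom.ofInjective (liftSL2_injective hpq)).symm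
    refine ⟨φ, fun B => ?_⟩
    have hB : liftSL2 hpq (φ B) = B := MonoidHom.apply_ofInjective_symm (liftSL2_injective hpq) _
    rw [eta_fin_two (φ B : Matrix (Fin 2) (Fin 2) ℤ), ← submatrix_liftSL2 hpq (φ B), hB]
    rfl

/-- Every `B ∈ S_{p,q}` fixes `e_r` for `r ∉ {p,q}`, and `B ↦ B♯` (the `2×2` block on
rows and columns `p, q`) is a group isomorphism from `S_{p,q}` onto `SL(2,ℤ)`. -/
theorem Spq_iso_SL2 (d : ℕ) (hd : 2 ≤ d) (p q : Fin d) (hpq : p < q) :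
    (∀ B ∈ Spq d p q, ∀ r : Fin d, r ≠ p → r ≠ q →
      (B : Matrix (Fin d) (Fin d) ℤ).mulVec (Pi.single r 1) = Pi.single r 1) ∧
    ∃ φ : Spq d p q ≃* Matrix.SpecialLinearGroup (Fin 2) ℤ,
      ∀ B : Spq d p q, (φ B : Matrix (Fin 2) (Fin 2) ℤ) =
        !![((B : (Matrix (Fin d) (Fin d) ℤ)ˣ) : Matrix (Fin d) (Fin d) ℤ) p p,
           ((B : (Matrix (Fin d) (Fin d) ℤ)ˣ) : Matrix (Fin d) (Fin d) ℤ) p q;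
           ((B : (Matrix (Fin d) (Fin d) ℤ)ˣ) : Matrix (Fin d) (Fin d) ℤ) q p,
           ((B : (Matrix (Fin d) (Fin d) ℤ)ˣ) : Matrix (Fin d) (Fin d) ℤ) q q] :=
  Spq_iso_SL2_general d p q hpq
end

section
/- For B in the subgroup S_{p,q} generated by L_p and L_q, the off-block coefficients in columns p and q are determined by the 2×2 block B♯: B_{r,p} = -1 + B_{p,p} - B_{q,p} for r < p, B_{r,p} = -1 + B_{p,p} + B_{q,p} for p < r < q, B_{r,p} = 1 - B_{p,p} + B_{q,p} for r > q; and B_{r,q} = 1 + B_{p,q} - B_{q,q} for r < p, B_{r,q} = -1 + B_{p,q} + B_{q,q} for p < r < q, B_{r,q} = -1 - B_{p,q} + B_{q,q} for r > q. -/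
/-!
Writing `colSign p r = ±1` for the entries of column `p` of `L_p`, a row vector `w` is fixed by
`L_p` exactly when `w ⬝ᵥ colSign p = w p`, since `L_p` changes only coordinate `p`. For `r ∉ {p, q}`
this holds for both `L_p` and `L_q` with `w = e_r + a e_p + b e_q`, `a = colSign q r`,
`b = -colSign p r`. Such a `w` is then fixed by every `B ∈ S_{p,q}`, and reading `w B = w` in
columns `p` and `q` gives the formulas.
-/

open Matrix

namespace Matrix

variable {n R : Type*} [Fintype n] [DecidableEq n] [Semiring R]

def rowStabilizer (w : n → R) : Subgroup (Matrix n n R)ˣ where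
  carrier := {u | w ᵥ* (u : Matrix n n R) = w}
  one_mem' := vecMul_one w
  mul_mem' {x y} (hx : w ᵥ* _ = w) (hy : w ᵥ* _ = w) := by
    change w ᵥ* _ = w
    rw [Units.val_mul, ← vecMul_vecMul, hx, hy]
  inv_mem' {x} (hx : w ᵥ* _ = w) := by
    change w ᵥ* _ = w
    nth_rewrite 1 [← hx]
    rw [vecMul_vecMul, Units.mul_inv, vecMul_one]

@[simp]
lemma mem_rowStabilizer {w : n → R} {u : (Matrix n n R)ˣ} :
    u ∈ rowStabilizer w ↔ w ᵥ* (u : Matrix n n R) = w :=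
  Iff.rfl

end Matrix

section Generators

variable {d : ℕ}

def colSign (p r : Fin d) : ℤ := if r < p then -1 else 1

lemma colSign_of_lt {p r : Fin d} (h : r < p) : colSign p r = -1 := if_pos h

lemma colSign_of_le {p r : Fin d} (h : p ≤ r) : colSign p r = 1 := if_neg h.not_gt

lemma vecMul_L_apply (w : Fin d → ℤ) (p s : Fin d) :
    (w ᵥ* L d p) s = if s = p then w ⬝ᵥ colSign p else w s := by
  split_ifs with hs
  · subst hs
    simp [vecMul, L, colSign, dotProduct]
  · simp [vecMul, L, hs, dotProduct]

lemma vecMul_L_eq_self (w : Fin d → ℤ) (p : Fin d) (h : w ⬝ᵥ colSign p = w p) :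
    w ᵥ* L d p = w := by
  ext s
  rw [vecMul_L_apply]
  split_ifs with hs
  · rw [hs, h]
  · rfl

lemma Spq_le_rowStabilizer (p q : Fin d) (w : Fin d → ℤ)
    (hp : w ⬝ᵥ colSign p = w p) (hq : w ⬝ᵥ colSign q = w q) :
    Spq d p q ≤ rowStabilizer w := by
  refine Subgroup.closure_le _ |>.mpr ?_
  rintro u (hu | hu) <;> simp only [SetLike.mem_coe, mem_rowStabilizer, hu]
  · exact vecMul_L_eq_self w p hp
  · exact vecMul_L_eq_self w q hq

end Generators

section FixedRow

variable {d : ℕ} {p q r : Fin d}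

def fixedRow (p q r : Fin d) : Fin d → ℤ :=
  Pi.single r 1 + Pi.single p (colSign q r) + Pi.single q (-colSign p r)

lemma fixedRow_dotProduct (p q r : Fin d) (c : Fin d → ℤ) :
    fixedRow p q r ⬝ᵥ c = c r + colSign q r * c p - colSign p r * c q := by
  simp [fixedRow, add_dotProduct, single_dotProduct, sub_eq_add_neg]

lemma fixedRow_apply_left (hpq : p < q) (hrp : r ≠ p) : fixedRow p q r p = colSign q r := by
  simp [fixedRow, hrp.symm, hpq.ne]

lemma fixedRow_apply_right (hpq : p < q) (hrq : r ≠ q) : fixedRow p q r q = -colSign p r := by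
  simp [fixedRow, hrq.symm, hpq.ne']

lemma Spq_le_rowStabilizer_fixedRow (hpq : p < q) (hrp : r ≠ p) (hrq : r ≠ q) :
    Spq d p q ≤ rowStabilizer (fixedRow p q r) := by
  apply Spq_le_rowStabilizer
  · rw [fixedRow_dotProduct, fixedRow_apply_left hpq hrp, colSign_of_le le_rfl,
      colSign_of_le hpq.le]
    ring
  · rw [fixedRow_dotProduct, fixedRow_apply_right hpq hrq, colSign_of_lt hpq,
      colSign_of_le le_rfl]
    ring

lemma Spq_apply_left (hpq : p < q) (hrp : r ≠ p) (hrq : r ≠ q) {u : (Matrix (Fin d) (Fin d) ℤ)ˣ}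
    (hu : u ∈ Spq d p q) :
    (u : Matrix (Fin d) (Fin d) ℤ) r p = colSign q r * (1 - u p p) + colSign p r * u q p := by
  have h := congrFun (Spq_le_rowStabilizer_fixedRow hpq hrp hrq hu) p
  rw [vecMul, fixedRow_dotProduct, fixedRow_apply_left hpq hrp] at h
  linear_combination h

lemma Spq_apply_right (hpq : p < q) (hrp : r ≠ p) (hrq : r ≠ q) {u : (Matrix (Fin d) (Fin d) ℤ)ˣ}
    (hu : u ∈ Spq d p q) :
    (u : Matrix (Fin d) (Fin d) ℤ) r q = -colSign p r * (1 - u q q) - colSign q r * u p q := by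
  have h := congrFun (Spq_le_rowStabilizer_fixedRow hpq hrp hrq hu) q
  rw [vecMul, fixedRow_dotProduct, fixedRow_apply_right hpq hrq] at h
  linear_combination h

end FixedRow

theorem Spq_column_formulas_general (d : ℕ) (p q : Fin d) (hpq : p < q)
    (u : (Matrix (Fin d) (Fin d) ℤ)ˣ) (hu : u ∈ Spq d p q) (r : Fin d) :
    letI B : Matrix (Fin d) (Fin d) ℤ := (u : Matrix (Fin d) (Fin d) ℤ)
    (r < p → B r p = -1 + B p p - B q p) ∧
    (p < r → r < q → B r p = -1 + B p p + B q p) ∧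
    (q < r → B r p = 1 - B p p + B q p) ∧
    (r < p → B r q = 1 + B p q - B q q) ∧
    (p < r → r < q → B r q = -1 + B p q + B q q) ∧
    (q < r → B r q = -1 - B p q + B q q) := by
  have left (hrp : r ≠ p) (hrq : r ≠ q) := Spq_apply_left hpq hrp hrq hu
  have right (hrp : r ≠ p) (hrq : r ≠ q) := Spq_apply_right hpq hrp hrq hu
  refine ⟨fun hrp => ?_, fun hpr hrq => ?_, fun hqr => ?_,
    fun hrp => ?_, fun hpr hrq => ?_, fun hqr => ?_⟩
  · have hrq := hrp.trans hpq
    rw [left hrp.ne hrq.ne, colSign_of_lt hrp, colSign_of_lt hrq]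
    ring
  · rw [left hpr.ne' hrq.ne, colSign_of_le hpr.le, colSign_of_lt hrq]
    ring
  · have hpr := hpq.trans hqr
    rw [left hpr.ne' hqr.ne', colSign_of_le hpr.le, colSign_of_le hqr.le]
    ring
  · have hrq := hrp.trans hpq
    rw [right hrp.ne hrq.ne, colSign_of_lt hrp, colSign_of_lt hrq]
    ring
  · rw [right hpr.ne' hrq.ne, colSign_of_le hpr.le, colSign_of_lt hrq]
    ring
  · have hpr := hpq.trans hqr
    rw [right hpr.ne' hqr.ne', colSign_of_le hpr.le, colSign_of_le hqr.le]
    ring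

/-- For `B ∈ S_{p,q}` the coefficients of `B` in columns `p` and `q` outside rows `p,q`
are determined by the `2×2` block `B♯`. -/
theorem Spq_column_formulas (d : ℕ) (hd : 2 ≤ d) (p q : Fin d) (hpq : p < q)
    (u : (Matrix (Fin d) (Fin d) ℤ)ˣ) (hu : u ∈ Spq d p q) (r : Fin d) :
    letI B : Matrix (Fin d) (Fin d) ℤ := (u : Matrix (Fin d) (Fin d) ℤ)
    (r < p → B r p = -1 + B p p - B q p) ∧
    (p < r → r < q → B r p = -1 + B p p + B q p) ∧
    (q < r → B r p = 1 - B p p + B q p) ∧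
    (r < p → B r q = 1 + B p q - B q q) ∧
    (p < r → r < q → B r q = -1 + B p q + B q q) ∧
    (q < r → B r q = -1 - B p q + B q q) :=
  Spq_column_formulas_general d p q hpq u hu r
end
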